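/- The operator Y = x(N-x)T⁺ + x(x-N-α-1)I acts on the basis φ_n(x) = (-x)_n as Y φ_n(x) = (n+α+1) φ_{n+1}(x) - n(2n+α-N) φ_n(x) + n(n-1)(n-N-1) φ_{n-1}(x), for 0 ≤ n ≤ N, with φ_{-1} = 0. -/

import Mathlib

noncomputable def poch (a : ℝ) (n : ℕ) : ℝ := ∏ i ∈ Finset.range n, (a + i)

/-- The Pochhammer basis φ_n(x) = (-x)_n. -/
noncomputable def phi (n : ℕ) (x : ℝ) : ℝ := poch (-x) n

lemma poch_zero (a : ℝ) : poch a 0 = 1 :=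
  Finset.prod_range_zero _

lemma poch_succ (a : ℝ) (n : ℕ) : poch a (n + 1) = poch a n * (a + n) :=
  Finset.prod_range_succ _ _

lemma poch_succ' (a : ℝ) (n : ℕ) : poch a (n + 1) = a * poch (a + 1) n := by
  rw [poch, poch, Finset.prod_range_succ', mul_comm]
  congr 1
  · simp
  · refine Finset.prod_congr rfl fun i _ => ?_
    push_cast
    ring

lemma phi_zero (x : ℝ) : phi 0 x = 1 :=
  poch_zero _

lemma phi_succ (n : ℕ) (x : ℝ) : phi (n + 1) x = phi n x * ((n : ℝ) - x) := by
  rw [phi, phi, poch_succ, neg_add_eq_sub]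

lemma phi_succ_add_one (n : ℕ) (x : ℝ) : phi (n + 1) (x + 1) = (-x - 1) * phi n x := by
  rw [phi, phi, poch_succ', neg_add, neg_add_cancel_right, neg_sub_left, add_comm, neg_add]

theorem stmt6_general (N : ℕ) (α : ℝ) (n : ℕ) (x : ℝ) :
    x * ((N : ℝ) - x) * phi n (x + 1) + x * (x - N - α - 1) * phi n x
      = ((n : ℝ) + α + 1) * phi (n + 1) x
        - (n : ℝ) * (2 * n + α - N) * phi n x
        + (n : ℝ) * ((n : ℝ) - 1) * ((n : ℝ) - N - 1) * phi (n - 1) x := by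
  cases n with
  | zero =>
    simp only [phi_succ, phi_zero]
    push_cast
    ring
  | succ m =>
    -- every term becomes φ_m(x) times a polynomial in x
    rw [Nat.add_sub_cancel, phi_succ_add_one, phi_succ (m + 1), phi_succ m]
    push_cast
    ring

theorem stmt6 (N : ℕ) (α : ℝ) (n : ℕ) (hn : n ≤ N) (x : ℝ) :
    x * ((N : ℝ) - x) * phi n (x + 1) + x * (x - N - α - 1) * phi n x
      = ((n : ℝ) + α + 1) * phi (n + 1) x
        - (n : ℝ) * (2 * n + α - N) * phi n x
        + (n : ℝ) * ((n : ℝ) - 1) * ((n : ℝ) - N - 1) * phi (n - 1) x :=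
  stmt6_general N α n x
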